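/- With the notation of the context, I(w) = −(1/(bg))·I(h₇) + (1/(g(2b+g)))·I(h₆ + 2h₇), where w(t,s) = −1/((s−1)(t−s)). -/

import Mathlib

open MeasureTheory

/-- The Dotsenko–Fateev weight `Φ(t,s) = |t|^a|s|^a|t−1|^b|s−1|^b|t−x|^c|s−y|^c|t−s|^g`. -/
noncomputable def dfWeight (a b c g x y : ℝ) (p : ℝ × ℝ) : ℝ :=
  |p.1| ^ a * |p.2| ^ a * |p.1 - 1| ^ b * |p.2 - 1| ^ b *
    |p.1 - x| ^ c * |p.2 - y| ^ c * |p.1 - p.2| ^ g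

/-- The complement in `ℝ²` of the seven lines `t=0, t=1, t=x, s=0, s=1, s=y, t=s`. -/
def dfComplement (x y : ℝ) : Set (ℝ × ℝ) :=
  {p | p.1 ≠ 0 ∧ p.1 ≠ 1 ∧ p.1 ≠ x ∧ p.2 ≠ 0 ∧ p.2 ≠ 1 ∧ p.2 ≠ y ∧ p.1 ≠ p.2}

/-- `I(h) = ∫_σ Φ h`. -/
noncomputable def dfInt (a b c g x y : ℝ) (σ : Set (ℝ × ℝ)) (h : ℝ × ℝ → ℝ) : ℝ :=
  ∫ p in σ, dfWeight a b c g x y p * h p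

/-- `h₁ = bc/((t−x)(s−1))`. -/
noncomputable def h1 (b c x : ℝ) (p : ℝ × ℝ) : ℝ := b * c / ((p.1 - x) * (p.2 - 1))

/-- `h₂ = bc/((t−1)(s−y))`. -/
noncomputable def h2 (b c y : ℝ) (p : ℝ × ℝ) : ℝ := b * c / ((p.1 - 1) * (p.2 - y))

/-- `h₃ = −cg/((t−x)(t−s))`. -/
noncomputable def h3 (c g x : ℝ) (p : ℝ × ℝ) : ℝ := -(c * g) / ((p.1 - x) * (p.1 - p.2))

/-- `h₄ = −cg/((s−y)(t−s))`. -/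
noncomputable def h4 (c g y : ℝ) (p : ℝ × ℝ) : ℝ := -(c * g) / ((p.2 - y) * (p.1 - p.2))

/-- `h₅ = c²/((t−x)(s−y))`. -/
noncomputable def h5 (c x y : ℝ) (p : ℝ × ℝ) : ℝ := c ^ 2 / ((p.1 - x) * (p.2 - y))

/-- `h₆ = −bg/((t−1)(t−s)) − bg/((s−1)(t−s))`. -/
noncomputable def h6 (b g : ℝ) (p : ℝ × ℝ) : ℝ :=
  -(b * g) / ((p.1 - 1) * (p.1 - p.2)) - b * g / ((p.2 - 1) * (p.1 - p.2))

/-- `h₇ = b²/((t−1)(s−1)) + bg/((s−1)(t−s))`. -/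
noncomputable def h7 (b g : ℝ) (p : ℝ × ℝ) : ℝ :=
  b ^ 2 / ((p.1 - 1) * (p.2 - 1)) + b * g / ((p.2 - 1) * (p.1 - p.2))

/-
Since `b, g > 0`, the weight `Φ` vanishes on the lines `t = 1`, `s = 1`, `t = s`, and
off these lines the expansion is an identity of rational functions: the Arnold relation
`1/((t−1)(t−s)) − 1/((s−1)(t−s)) = −1/((t−1)(s−1))` gives `h₆ + 2h₇ = b(2b+g)/((t−1)(s−1))`.
So `Φ·w` equals the claimed combination pointwise, and linearity of the integral finishes the
proof once `Φ·h₇` and `Φ·(h₆+2h₇)` are integrable on the bounded set `σ`. For that, each pole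
`1/ℓ` is absorbed by the factor `|ℓ|^e` of `Φ` with `e ≥ 1`, since `||ℓ|^e / ℓ| ≤ |ℓ|^(e−1)`:
every integrand is dominated by a continuous function.
-/

lemma abs_abs_rpow_div_self_le (u e : ℝ) : |(|u| ^ e / u)| ≤ |u| ^ (e - 1) := by
  rcases eq_or_ne u 0 with rfl | hu
  · simpa using Real.rpow_nonneg le_rfl (e - 1)
  · rw [abs_div, abs_of_nonneg (by positivity), Real.rpow_sub_one (abs_ne_zero.mpr hu)]

lemma locallyIntegrable_mul_abs_rpow_div_mul_abs_rpow_div {X : Type*} [TopologicalSpace X]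
    [MeasurableSpace X] [OpensMeasurableSpace X] [SecondCountableTopologyEither X ℝ]
    {μ : Measure X} [IsLocallyFiniteMeasure μ] {F u v : X → ℝ}
    (hF : Continuous F) (hu : Continuous u) (hv : Continuous v) {e f : ℝ} (he : 1 ≤ e)
    (hf : 1 ≤ f) :
    LocallyIntegrable (fun p => F p * (|u p| ^ e / u p) * (|v p| ^ f / v p)) μ := by
  have hdom : Continuous fun p => |F p| * |u p| ^ (e - 1) * |v p| ^ (f - 1) := by
    fun_prop (disch := linarith)
  have hmeas : Measurable fun p => F p * (|u p| ^ e / u p) * (|v p| ^ f / v p) := by fun_prop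
  refine hdom.locallyIntegrable.mono hmeas.aestronglyMeasurable (.of_forall fun p => ?_)
  have hu' := abs_abs_rpow_div_self_le (u p) e
  have hv' := abs_abs_rpow_div_self_le (v p) f
  calc ‖F p * (|u p| ^ e / u p) * (|v p| ^ f / v p)‖
      = |F p| * |(|u p| ^ e / u p)| * |(|v p| ^ f / v p)| := by
        simp only [Real.norm_eq_abs, abs_mul]
    _ ≤ |F p| * |u p| ^ (e - 1) * |v p| ^ (f - 1) := by gcongr
    _ = ‖|F p| * |u p| ^ (e - 1) * |v p| ^ (f - 1)‖ := by
        rw [Real.norm_of_nonneg (by positivity)]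

theorem MeasureTheory.LocallyIntegrable.integrableOn_of_isBounded {X E : Type*}
    [PseudoMetricSpace X] [ProperSpace X] [MeasurableSpace X] [NormedAddCommGroup E]
    {μ : Measure X} {f : X → E} {s : Set X} (hf : LocallyIntegrable f μ)
    (hs : Bornology.IsBounded s) : IntegrableOn f s μ :=
  (hf.integrableOn_isCompact hs.isCompact_closure).mono_set subset_closure

section DotsenkoFateev

variable {a b c g x y : ℝ}

lemma dfWeight_eq_zero_of_fst_eq_one (hb : b ≠ 0) {p : ℝ × ℝ} (hp : p.1 = 1) :
    dfWeight a b c g x y p = 0 := by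
  simp [dfWeight, hp, Real.zero_rpow hb]

lemma dfWeight_eq_zero_of_snd_eq_one (hb : b ≠ 0) {p : ℝ × ℝ} (hp : p.2 = 1) :
    dfWeight a b c g x y p = 0 := by
  simp [dfWeight, hp, Real.zero_rpow hb]

lemma dfWeight_eq_zero_of_fst_eq_snd (hg : g ≠ 0) {p : ℝ × ℝ} (hp : p.1 = p.2) :
    dfWeight a b c g x y p = 0 := by
  simp [dfWeight, hp, Real.zero_rpow hg]

lemma h6_add_two_mul_h7 {p : ℝ × ℝ} (ht : p.1 - 1 ≠ 0) (hs : p.2 - 1 ≠ 0) (hts : p.1 - p.2 ≠ 0) :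
    h6 b g p + 2 * h7 b g p = b * (2 * b + g) / ((p.1 - 1) * (p.2 - 1)) := by
  simp only [h6, h7]
  field_simp
  ring

lemma dfWeight_mul_omega57 (hb : b ≠ 0) (hg : g ≠ 0) (h2bg : 2 * b + g ≠ 0) (p : ℝ × ℝ) :
    dfWeight a b c g x y p * (-1 / ((p.2 - 1) * (p.1 - p.2))) =
      -(1 / (b * g)) * (dfWeight a b c g x y p * h7 b g p) +
        (1 / (g * (2 * b + g))) * (dfWeight a b c g x y p * (h6 b g p + 2 * h7 b g p)) := by
  by_cases ht : p.1 = 1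
  · simp [dfWeight_eq_zero_of_fst_eq_one hb ht]
  by_cases hs : p.2 = 1
  · simp [dfWeight_eq_zero_of_snd_eq_one hb hs]
  by_cases hts : p.1 = p.2
  · simp [dfWeight_eq_zero_of_fst_eq_snd hg hts]
  have ht' : p.1 - 1 ≠ 0 := sub_ne_zero.mpr ht
  have hs' : p.2 - 1 ≠ 0 := sub_ne_zero.mpr hs
  have hts' : p.1 - p.2 ≠ 0 := sub_ne_zero.mpr hts
  have h67 : 1 / (g * (2 * b + g)) * (h6 b g p + 2 * h7 b g p) =
      b / (g * ((p.1 - 1) * (p.2 - 1))) := by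
    rw [h6_add_two_mul_h7 ht' hs' hts']
    field_simp
  rw [mul_left_comm (1 / (g * (2 * b + g))), h67, h7]
  field_simp
  ring

lemma locallyIntegrable_dfWeight_div_fst_sub_one_mul_sub (ha : 0 ≤ a) (hb : 1 ≤ b) (hc : 0 ≤ c)
    (hg : 1 ≤ g) :
    LocallyIntegrable (fun p : ℝ × ℝ =>
      dfWeight a b c g x y p * (1 / ((p.1 - 1) * (p.1 - p.2)))) := by
  refine (locallyIntegrable_mul_abs_rpow_div_mul_abs_rpow_div
    (F := fun p : ℝ × ℝ => |p.1| ^ a * |p.2| ^ a * |p.2 - 1| ^ b * |p.1 - x| ^ c * |p.2 - y| ^ c)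
    (u := fun p => p.1 - 1) (v := fun p => p.1 - p.2) (by fun_prop (disch := linarith))
    (by fun_prop) (by fun_prop) hb hg).congr (.of_forall fun p => ?_)
  simp only [dfWeight, one_div, mul_inv]
  ring

lemma locallyIntegrable_dfWeight_div_snd_sub_one_mul_sub (ha : 0 ≤ a) (hb : 1 ≤ b) (hc : 0 ≤ c)
    (hg : 1 ≤ g) :
    LocallyIntegrable (fun p : ℝ × ℝ =>
      dfWeight a b c g x y p * (1 / ((p.2 - 1) * (p.1 - p.2)))) := by
  refine (locallyIntegrable_mul_abs_rpow_div_mul_abs_rpow_div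
    (F := fun p : ℝ × ℝ => |p.1| ^ a * |p.2| ^ a * |p.1 - 1| ^ b * |p.1 - x| ^ c * |p.2 - y| ^ c)
    (u := fun p => p.2 - 1) (v := fun p => p.1 - p.2) (by fun_prop (disch := linarith))
    (by fun_prop) (by fun_prop) hb hg).congr (.of_forall fun p => ?_)
  simp only [dfWeight, one_div, mul_inv]
  ring

lemma locallyIntegrable_dfWeight_div_fst_sub_one_mul_snd_sub_one (ha : 0 ≤ a) (hb : 1 ≤ b)
    (hc : 0 ≤ c) (hg : 0 ≤ g) :
    LocallyIntegrable (fun p : ℝ × ℝ =>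
      dfWeight a b c g x y p * (1 / ((p.1 - 1) * (p.2 - 1)))) := by
  refine (locallyIntegrable_mul_abs_rpow_div_mul_abs_rpow_div
    (F := fun p : ℝ × ℝ => |p.1| ^ a * |p.2| ^ a * |p.1 - x| ^ c * |p.2 - y| ^ c * |p.1 - p.2| ^ g)
    (u := fun p => p.1 - 1) (v := fun p => p.2 - 1) (by fun_prop (disch := linarith))
    (by fun_prop) (by fun_prop) hb hb).congr (.of_forall fun p => ?_)
  simp only [dfWeight, one_div, mul_inv]
  ring

lemma locallyIntegrable_dfWeight_mul_h7 (ha : 0 ≤ a) (hb : 1 ≤ b) (hc : 0 ≤ c) (hg : 1 ≤ g) :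
    LocallyIntegrable (fun p => dfWeight a b c g x y p * h7 b g p) := by
  have hB := locallyIntegrable_dfWeight_div_snd_sub_one_mul_sub (x := x) (y := y) ha hb hc hg
  have hC := locallyIntegrable_dfWeight_div_fst_sub_one_mul_snd_sub_one (x := x) (y := y) ha hb
    hc (zero_le_one.trans hg)
  refine ((hC.smul (b ^ 2)).add (hB.smul (b * g))).congr (.of_forall fun p => ?_)
  simp only [Pi.add_apply, Pi.smul_apply, smul_eq_mul, h7]
  ring

lemma locallyIntegrable_dfWeight_mul_h6_add_two_mul_h7 (ha : 0 ≤ a) (hb : 1 ≤ b) (hc : 0 ≤ c)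
    (hg : 1 ≤ g) :
    LocallyIntegrable (fun p => dfWeight a b c g x y p * (h6 b g p + 2 * h7 b g p)) := by
  have hA := locallyIntegrable_dfWeight_div_fst_sub_one_mul_sub (x := x) (y := y) ha hb hc hg
  have hB := locallyIntegrable_dfWeight_div_snd_sub_one_mul_sub (x := x) (y := y) ha hb hc hg
  have hC := locallyIntegrable_dfWeight_div_fst_sub_one_mul_snd_sub_one (x := x) (y := y) ha hb
    hc (zero_le_one.trans hg)
  refine (((hA.smul (-(b * g))).add (hB.smul (b * g))).add (hC.smul (2 * b ^ 2))).congr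
    (.of_forall fun p => ?_)
  simp only [Pi.add_apply, Pi.smul_apply, smul_eq_mul, h6, h7]
  ring

end DotsenkoFateev

theorem expansion_omega57_general (x y a b c g : ℝ)
    (ha : 1 < a) (hb : 1 < b) (hc : 1 < c) (hg : 1 < g)
    (σ : Set (ℝ × ℝ)) (hbd : Bornology.IsBounded σ) :
    dfInt a b c g x y σ (fun p => -1 / ((p.2 - 1) * (p.1 - p.2))) =
      -(1 / (b * g)) * dfInt a b c g x y σ (fun p => h7 b g p)
        + (1 / (g * (2 * b + g))) * dfInt a b c g x y σ (fun p => h6 b g p + 2 * h7 b g p) := by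
  have ha0 : 0 ≤ a := zero_le_one.trans ha.le
  have hc0 : 0 ≤ c := zero_le_one.trans hc.le
  have hΦh7 := (locallyIntegrable_dfWeight_mul_h7 (x := x) (y := y) ha0 hb.le hc0
    hg.le).integrableOn_of_isBounded hbd
  have hΦh67 := (locallyIntegrable_dfWeight_mul_h6_add_two_mul_h7 (x := x) (y := y) ha0 hb.le hc0
    hg.le).integrableOn_of_isBounded hbd
  simp only [dfInt]
  rw [integral_congr_ae (.of_forall (dfWeight_mul_omega57 (by positivity) (by positivity)
      (by positivity))),
    integral_add (hΦh7.const_mul _) (hΦh67.const_mul _), integral_const_mul, integral_const_mul]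

/-- the cohomological expansion ω₅₇ ∼ −(1/(bg))η₇ + (1/(g(2b+g)))(η₆+2η₇)
integrated over a bounded chamber `σ` of the Dotsenko–Fateev arrangement. -/
theorem expansion_omega57 (x y a b c g : ℝ)
    (hx0 : x ≠ 0) (hx1 : x ≠ 1) (hy0 : y ≠ 0) (hy1 : y ≠ 1) (hxy : x ≠ y)
    (ha : 1 < a) (hb : 1 < b) (hc : 1 < c) (hg : 1 < g)
    (σ : Set (ℝ × ℝ)) (hbd : Bornology.IsBounded σ)
    (hcc : ∃ p ∈ dfComplement x y, σ = connectedComponentIn (dfComplement x y) p) :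
    dfInt a b c g x y σ (fun p => -1 / ((p.2 - 1) * (p.1 - p.2))) =
      -(1 / (b * g)) * dfInt a b c g x y σ (fun p => h7 b g p)
        + (1 / (g * (2 * b + g))) * dfInt a b c g x y σ (fun p => h6 b g p + 2 * h7 b g p) :=
  expansion_omega57_general x y a b c g ha hb hc hg σ hbd
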